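/- Let W be a nonempty finite type with a probability vector ρ : W → ℝ, let Ω be a finite type with decidable equality, let Π be a finite type ('deterministic policies') with card Π ≥ B ≥ 1, and let Φ : Π → W → Ω assign to each policy and each world a deterministic trajectory embedding. For a tuple π : Fin B → Π, define H(π) as the Shannon entropy of the pushforward of ρ under w ↦ (i ↦ Φ (π i) w) : W → (Fin B → Ω). Then there exists an injective tuple π* : Fin B → Π (i.e. π* i ≠ π* j for all i ≠ j) achieving the maximum of H over all tuples π : Fin B → Π. -/
import Mathlib

/-- Shannon entropy of the pushforward of the vector `ρ` on `W` under `f : W → T`: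
the pushforward assigns to each `t` the total mass `∑_{w : f w = t} ρ w`. -/
noncomputable def pushEnt {W T : Type*} [Fintype W] [Fintype T] [DecidableEq T]
    (ρ : W → ℝ) (f : W → T) : ℝ :=
  ∑ t, (∑ w ∈ Finset.univ.filter fun w => f w = t, ρ w) *
    Real.log (1 / ∑ w ∈ Finset.univ.filter fun w => f w = t, ρ w)

lemma negMulLog_add_le {a b : ℝ} (ha : 0 ≤ a) (hb : 0 ≤ b) :
    Real.negMulLog (a + b) ≤ Real.negMulLog a + Real.negMulLog b := by
  have key : ∀ x y : ℝ, 0 ≤ x → 0 ≤ y → x * Real.log x ≤ x * Real.log (x + y) := by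
    intro x y hx hy
    rcases eq_or_lt_of_le hx with h | h
    · simp [← h]
    · exact mul_le_mul_of_nonneg_left (Real.log_le_log h (by linarith)) hx
  have h1 := key a b ha hb
  have h2 := key b a hb ha
  rw [add_comm b a] at h2
  simp only [Real.negMulLog, neg_mul]
  nlinarith

lemma negMulLog_sum_le {S : Type*} (A : Finset S) (p : S → ℝ) (hp : ∀ s, 0 ≤ p s) :
    Real.negMulLog (∑ s ∈ A, p s) ≤ ∑ s ∈ A, Real.negMulLog (p s) := by
  induction A using Finset.cons_induction with
  | empty => simp
  | cons a A h ih =>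
    rw [Finset.sum_cons, Finset.sum_cons]
    calc Real.negMulLog (p a + ∑ s ∈ A, p s)
        ≤ Real.negMulLog (p a) + Real.negMulLog (∑ s ∈ A, p s) :=
          negMulLog_add_le (hp a) (Finset.sum_nonneg fun s _ => hp s)
      _ ≤ _ := by linarith

lemma pushEnt_eq {W T : Type*} [Fintype W] [Fintype T] [DecidableEq T]
    (ρ : W → ℝ) (f : W → T) :
    pushEnt ρ f = ∑ t, Real.negMulLog (∑ w ∈ Finset.univ.filter fun w => f w = t, ρ w) := by
  unfold pushEnt
  refine Finset.sum_congr rfl fun t _ => ?_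
  rw [Real.negMulLog, one_div, Real.log_inv]
  ring

lemma pushEnt_comp_le {W T S : Type*} [Fintype W] [Fintype T] [Fintype S]
    [DecidableEq T] [DecidableEq S]
    (ρ : W → ℝ) (hρ0 : ∀ w, 0 ≤ ρ w) (g : W → S) (φ : S → T) :
    pushEnt ρ (φ ∘ g) ≤ pushEnt ρ g := by
  rw [pushEnt_eq, pushEnt_eq]
  have hsplit : ∀ t, (∑ w ∈ Finset.univ.filter fun w => (φ ∘ g) w = t, ρ w)
      = ∑ s ∈ Finset.univ.filter fun s => φ s = t,
          (∑ w ∈ Finset.univ.filter fun w => g w = s, ρ w) := by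
    intro t
    rw [← Finset.sum_fiberwise (Finset.univ.filter fun w => (φ ∘ g) w = t) g ρ,
      Finset.sum_filter]
    refine Finset.sum_congr rfl fun s _ => ?_
    split
    · next hφ =>
      refine Finset.sum_congr ?_ fun _ _ => rfl
      ext w
      simp only [Finset.mem_filter, Finset.mem_univ, true_and, Function.comp]
      constructor
      · rintro ⟨_, h⟩; exact h
      · rintro h; subst h; exact ⟨hφ, rfl⟩
    · next hφ =>
      refine Finset.sum_eq_zero fun w hw => ?_
      simp only [Finset.mem_filter, Finset.mem_univ, true_and, Function.comp] at hw
      exact absurd (hw.2 ▸ hw.1) hφ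
  calc ∑ t, Real.negMulLog (∑ w ∈ Finset.univ.filter fun w => (φ ∘ g) w = t, ρ w)
      ≤ ∑ t, ∑ s ∈ Finset.univ.filter fun s => φ s = t,
          Real.negMulLog (∑ w ∈ Finset.univ.filter fun w => g w = s, ρ w) := by
        refine Finset.sum_le_sum fun t _ => ?_
        rw [hsplit t]
        exact negMulLog_sum_le _ _ fun s => Finset.sum_nonneg fun w _ => hρ0 w
    _ = _ := Finset.sum_fiberwise Finset.univ φ _

theorem exists_injective_entropy_maximizer
    {W Ω Pol : Type*} [Fintype W] [Nonempty W] [Fintype Ω] [DecidableEq Ω]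
    [Fintype Pol]
    (ρ : W → ℝ) (hρ0 : ∀ w, 0 ≤ ρ w) (hρ1 : ∑ w, ρ w = 1)
    (B : ℕ) (hB : 1 ≤ B) (hcard : B ≤ Fintype.card Pol)
    (Φ : Pol → W → Ω) :
    ∃ πstar : Fin B → Pol, Function.Injective πstar ∧
      ∀ π : Fin B → Pol,
        pushEnt ρ (fun w => fun i => Φ (π i) w) ≤
          pushEnt ρ (fun w => fun i => Φ (πstar i) w) := by
  classical
  -- every tuple is dominated by an injective tuple
  have improve : ∀ π : Fin B → Pol, ∃ π' : Fin B → Pol, Function.Injective π' ∧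
      pushEnt ρ (fun w => fun i => Φ (π i) w) ≤
        pushEnt ρ (fun w => fun i => Φ (π' i) w) := by
    intro π
    -- find injective π' and σ with π = π' ∘ σ
    obtain ⟨T, hsub, -, hTcard⟩ := Finset.exists_subsuperset_card_eq (n := B)
      (Finset.subset_univ (Finset.image π Finset.univ))
      (Finset.card_image_le.trans (by simp))
      (by simpa using hcard)
    have e : Fin B ≃ {x // x ∈ T} :=
      (Fin.castOrderIso (by rw [hTcard]) |>.toEquiv).trans
        (T.equivFin).symm
    set π' : Fin B → Pol := fun i => (e i : Pol) with hπ'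
    have hinj : Function.Injective π' := fun i j h => e.injective (Subtype.ext h)
    have hσ : ∀ i, ∃ j, π' j = π i := by
      intro i
      have : π i ∈ T := hsub (Finset.mem_image_of_mem π (Finset.mem_univ i))
      exact ⟨e.symm ⟨π i, this⟩, by simp [hπ']⟩
    choose σ hσ using hσ
    refine ⟨π', hinj, ?_⟩
    have : (fun w => fun i => Φ (π i) w) =
        (fun v : Fin B → Ω => fun i => v (σ i)) ∘ (fun w => fun i => Φ (π' i) w) := by
      funext w
      funext i
      simp [Function.comp, hσ i]
    rw [this]
    exact pushEnt_comp_le ρ hρ0 _ _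
  -- maximize over the (finite, nonempty) set of all tuples
  have hPol : Nonempty Pol := Fintype.card_pos_iff.mp (lt_of_lt_of_le hB hcard)
  obtain ⟨π0, -, hmax⟩ := Finset.exists_max_image (Finset.univ : Finset (Fin B → Pol))
    (fun π => pushEnt ρ (fun w => fun i => Φ (π i) w)) Finset.univ_nonempty
  obtain ⟨π1, hinj, hle⟩ := improve π0
  exact ⟨π1, hinj, fun π => (hmax π (Finset.mem_univ π)).trans hle⟩
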